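/- Let S be a regular line spread of a hyperplane Σ∞ of PG(4,q), with transversal lines g, g^q in the quadratic extension PG(3,q^2) of Σ∞. Let K be a ruled cubic surface in PG(4,q) with line directrix b ∈ S such that Σ∞ ∩ K = b. If for every spread line L ∈ S distinct from b, the extension of K to PG(4,q^2) contains the points g ∩ L' and g^q ∩ L' (where L' is the extension of L), then the extension of K contains the transversal lines g and g^q entirely. -/

import Mathlib

open Projectivization

variable (F E : Type) [Field F] [Fintype F] [Field E] [Algebra F E]

/-- The points of `PG(4,q)` over the field `F` of order `q`. -/
abbrev PGPt := Projectivization F (Fin 5 → F)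

/-- The points of the quadratic extension `PG(4,q²)` over `E`. -/
abbrev PGPtE := Projectivization E (Fin 5 → E)

/-- Coordinatewise inclusion of `F⁵` into `E⁵`. -/
def toE (v : Fin 5 → F) : Fin 5 → E := fun i => algebraMap F E (v i)

/-- The extension to `E` of an `F`-subspace of `F⁵`. -/
def extSub (U : Submodule F (Fin 5 → F)) : Submodule E (Fin 5 → E) :=
  Submodule.span E (toE F E '' (U : Set (Fin 5 → F)))

/-- The point set in `PG(4,q²)` of the extension of a subspace of `PG(4,q)`. -/
def extSet (U : Submodule F (Fin 5 → F)) : Set (PGPtE E) :=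
  {p | p.submodule ≤ extSub F E U}

/-- The base change to `E⁵` of a linear automorphism of `F⁵` (via its matrix). -/
def extMap (g : (Fin 5 → F) ≃ₗ[F] (Fin 5 → F)) (v : Fin 5 → E) : Fin 5 → E :=
  ((LinearMap.toMatrix' (g : (Fin 5 → F) →ₗ[F] (Fin 5 → F))).map (algebraMap F E)).mulVec v

/-- A line of `PG(4,q²)`. -/
def IsLineE (S : Set (PGPtE E)) : Prop :=
  ∃ W : Submodule E (Fin 5 → E), Module.finrank E W = 2 ∧ S = {p | p.submodule ≤ W}

/-- The `F`-rational points of `PG(4,q²)`. -/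
def FRat : Set (PGPtE E) :=
  {p | ∃ v : Fin 5 → F, v ≠ 0 ∧ p.submodule = Submodule.span E {toE F E v}}

/-- `S` is a line spread of the hyperplane of `PG(4,q)` determined by `W`
(lines recorded as rank-2 `F`-subspaces). -/
def IsSpread (W : Submodule F (Fin 5 → F)) (S : Set (Submodule F (Fin 5 → F))) : Prop :=
  (∀ U ∈ S, Module.finrank F U = 2 ∧ U ≤ W) ∧
  (∀ U ∈ S, ∀ U' ∈ S, U ≠ U' → U ⊓ U' = ⊥) ∧
  (∀ v ∈ W, v ≠ 0 → ∃ U ∈ S, v ∈ U)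

/-- The ruled cubic surface in `PG(4,q)` determined by the projective transformation `g`
(image of the standard scroll ruling a line and a conic by a projectivity). -/
def RuledCubic (g : (Fin 5 → F) ≃ₗ[F] (Fin 5 → F)) : Set (PGPt F) :=
  {p | ∃ a b s t : F, (a ≠ 0 ∨ b ≠ 0) ∧ (s ≠ 0 ∨ t ≠ 0) ∧
    p.submodule = Submodule.span F {g ![s * a, s * b, t * a ^ 2, t * (a * b), t * b ^ 2]}}

/-- The extension to `PG(4,q²)` of the ruled cubic surface determined by `g`. -/
def RuledCubicExt (g : (Fin 5 → F) ≃ₗ[F] (Fin 5 → F)) : Set (PGPtE E) :=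
  {p | ∃ a b s t : E, (a ≠ 0 ∨ b ≠ 0) ∧ (s ≠ 0 ∨ t ≠ 0) ∧
    p.submodule = Submodule.span E
      {extMap F E g ![s * a, s * b, t * a ^ 2, t * (a * b), t * b ^ 2]}}

/-! Extending scalars keeps disjoint subspaces disjoint: a vector of the extension of `U` is
sent into `U` by every coordinatewise `F`-linear functional `E → F`, and these functionals
separate points. Hence a line of `PG(4,q²)` meeting each of the `q² + 1` extended spread lines
in a single point meets them in `q² + 1` distinct points, which are all of its points. Those
on extended lines other than `b` lie on the surface by hypothesis, and those on the extension
of `b` lie on the extended directrix, the part `t = 0` of the parametrised scroll. -/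

section ProjectiveLines

variable {K V : Type*} [Field K] [AddCommGroup V] [Module K V]

theorem Projectivization.submodule_le_iff_rep_mem (p : Projectivization K V) {L : Submodule K V} :
    p.submodule ≤ L ↔ p.rep ∈ L := by
  rw [submodule_eq, Submodule.span_singleton_le_iff_mem]

theorem Projectivization.ncard_setOf_submodule_le [Finite K] {L : Submodule K V}
    (hL : Module.finrank K L = 2) :
    {p : Projectivization K V | p.submodule ≤ L}.ncard = Nat.card K + 1 := by
  have hrange : Set.range (map L.subtype L.injective_subtype) = {p | p.submodule ≤ L} := by
    ext p
    constructor
    · rintro ⟨p, rfl⟩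
      induction p using Projectivization.ind with
      | h v _ => simp [map_mk, submodule_mk]
    · intro hp
      refine ⟨mk K ⟨p.rep, p.submodule_le_iff_rep_mem.1 hp⟩
        (by simpa using p.rep_nonzero), ?_⟩
      simp [map_mk, mk_rep]
  rw [← hrange, Set.ncard_range_of_injective (map_injective _ _), card_of_finrank_two K L hL]

theorem Submodule.ncard_sdiff_zero [Finite K] [Module.Finite K V] (U : Submodule K V) :
    ((U : Set V) \ {0}).ncard = Nat.card K ^ Module.finrank K U - 1 := by
  rw [Set.ncard_sdiff_singleton_of_mem U.zero_mem, ← Nat.card_coe_set_eq,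
    SetLike.coe_sort_coe, Module.natCard_eq_pow_finrank (K := K)]

end ProjectiveLines

theorem IsSpread.ncard {K : Type} [Field K] [Finite K] {W : Submodule K (Fin 5 → K)}
    {S : Set (Submodule K (Fin 5 → K))} (hS : IsSpread K W S) (hW : Module.finrank K W = 4) :
    S.ncard = Nat.card K ^ 2 + 1 := by
  have hcover : (W : Set (Fin 5 → K)) \ {0} = ⋃ U ∈ S, (U : Set (Fin 5 → K)) \ {0} := by
    ext v
    simp only [Set.mem_sdiff, Set.mem_iUnion, SetLike.mem_coe, Set.mem_singleton_iff, exists_prop]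
    constructor
    · rintro ⟨hvW, hv0⟩
      obtain ⟨U, hU, hvU⟩ := hS.2.2 v hvW hv0
      exact ⟨U, hU, hvU, hv0⟩
    · rintro ⟨U, hU, hvU, hv0⟩
      exact ⟨(hS.1 U hU).2 hvU, hv0⟩
  have hdisj : S.PairwiseDisjoint fun U => (U : Set (Fin 5 → K)) \ {0} := by
    intro U hU U' hU' hne
    rw [Function.onFun, Set.disjoint_left]
    rintro v ⟨hvU, hv0⟩ ⟨hvU', -⟩
    have hv : v ∈ U ⊓ U' := ⟨hvU, hvU'⟩
    rw [hS.2.1 U hU U' hU' hne] at hv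
    exact hv0 hv
  have hcount :
      S.ncard * (Nat.card K ^ 2 - 1) = (Nat.card K ^ 2 + 1) * (Nat.card K ^ 2 - 1) := by
    rw [← mul_self_tsub_one, ← pow_add, show 2 + 2 = Module.finrank K W from hW.symm,
      ← W.ncard_sdiff_zero, hcover,
      (Set.toFinite S).ncard_biUnion (fun _ _ => Set.toFinite _) hdisj,
      finsum_mem_congr rfl fun U hU => by
        rw [U.ncard_sdiff_zero, (hS.1 U hU).1, ← one_mul (_ - 1)],
      ← finsum_mem_mul' _ _ (Set.toFinite S), finsum_one]
  exact Nat.eq_of_mul_eq_mul_right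
    (Nat.sub_pos_of_lt (Nat.one_lt_pow two_ne_zero Finite.one_lt_card)) hcount

section ScalarExtension

variable {K L : Type} [Field K] [Field L] [Algebra K L]

theorem toE_eq_compLeft : toE K L = (Algebra.linearMap K L).compLeft (Fin 5) := rfl

theorem extSub_span (s : Set (Fin 5 → K)) :
    extSub K L (Submodule.span K s) = Submodule.span L (toE K L '' s) := by
  rw [extSub, toE_eq_compLeft, ← Submodule.map_coe, Submodule.map_span,
    Submodule.span_span_of_tower]

theorem extSub_mono {U U' : Submodule K (Fin 5 → K)} (h : U ≤ U') :
    extSub K L U ≤ extSub K L U' :=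
  Submodule.span_mono (Set.image_mono h)

theorem compLeft_mem_of_mem_extSub {U : Submodule K (Fin 5 → K)} {v : Fin 5 → L}
    (hv : v ∈ extSub K L U) (φ : Module.Dual K L) : φ.compLeft (Fin 5) v ∈ U := by
  induction hv using Submodule.span_induction generalizing φ with
  | mem x hx =>
    obtain ⟨u, hu, rfl⟩ := hx
    convert U.smul_mem (φ 1) hu using 1
    ext i
    simp [toE, Algebra.algebraMap_eq_smul_one, mul_comm]
  | zero => simp
  | add x y _ _ hx hy => simpa using U.add_mem (hx φ) (hy φ)
  | smul e x _ hx =>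
    convert hx (φ ∘ₗ LinearMap.mulLeft K e) using 1
    ext i
    simp

theorem extSub_inf_eq_bot {U U' : Submodule K (Fin 5 → K)} (h : U ⊓ U' = ⊥) :
    extSub K L U ⊓ extSub K L U' = ⊥ := by
  refine eq_bot_iff.2 fun v ⟨hv, hv'⟩ => (Submodule.mem_bot L).2 ?_
  have hcomp (φ : Module.Dual K L) : φ.compLeft (Fin 5) v = 0 := by
    simpa [h] using Submodule.mem_inf.2
      ⟨compLeft_mem_of_mem_extSub hv φ, compLeft_mem_of_mem_extSub hv' φ⟩
  funext i
  exact (Module.forall_dual_apply_eq_zero_iff K (v i)).1 fun φ => congrFun (hcomp φ) i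

theorem disjoint_extSet {U U' : Submodule K (Fin 5 → K)} (h : U ⊓ U' = ⊥) :
    Disjoint (extSet K L U) (extSet K L U') := by
  refine Set.disjoint_left.2 fun p hp hp' => p.rep_nonzero ?_
  rw [extSet, Set.mem_ofPred_eq, submodule_le_iff_rep_mem] at hp hp'
  simpa [extSub_inf_eq_bot h] using Submodule.mem_inf.2 ⟨hp, hp'⟩

theorem extMap_toE (g : (Fin 5 → K) ≃ₗ[K] (Fin 5 → K)) (v : Fin 5 → K) :
    extMap K L g (toE K L v) = toE K L (g v) := by
  funext i
  have hmap := RingHom.map_mulVec (algebraMap K L)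
    (LinearMap.toMatrix' (g : (Fin 5 → K) →ₗ[K] _)) v i
  rw [LinearMap.toMatrix'_mulVec] at hmap
  exact hmap.symm

theorem IsSpread.exists_mem_extSet_of_mem_line [Finite K] (hL2 : Module.finrank K L = 2)
    {W : Submodule K (Fin 5 → K)} (hW : Module.finrank K W = 4)
    {S : Set (Submodule K (Fin 5 → K))} (hS : IsSpread K W S)
    {G : Set (PGPtE L)} (hG : IsLineE L G) (hmeet : ∀ U ∈ S, (G ∩ extSet K L U).ncard = 1)
    {p : PGPtE L} (hp : p ∈ G) : ∃ U ∈ S, p ∈ extSet K L U := by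
  have : Module.Finite K L := Module.finite_of_finrank_eq_succ hL2
  have : Finite L := Module.finite_of_finite K
  obtain ⟨M, hM, rfl⟩ := hG
  choose! f hf using fun U hU => Set.ncard_eq_one.1 (hmeet U hU)
  have hfmem (U) (hU : U ∈ S) : f U ∈ {p : PGPtE L | p.submodule ≤ M} ∩ extSet K L U := by
    rw [hf U hU]; rfl
  have hinj : S.InjOn f := fun U hU U' hU' hfU => by
    by_contra hne
    exact Set.disjoint_left.1 (disjoint_extSet (hS.2.1 U hU U' hU' hne)) (hfmem U hU).2
      (hfU ▸ (hfmem U' hU').2)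
  have hsurj : f '' S = {p : PGPtE L | p.submodule ≤ M} := by
    refine Set.eq_of_subset_of_ncard_le (Set.image_subset_iff.2 fun U hU => (hfmem U hU).1) ?_
      (Set.toFinite _)
    rw [hinj.ncard_image, hS.ncard hW, ncard_setOf_submodule_le hM,
      Module.natCard_eq_pow_finrank (K := K), hL2]
  obtain ⟨U, hU, rfl⟩ := hsurj ▸ hp
  exact ⟨U, hU, (hfmem U hU).2⟩

theorem le_span_of_directrix {g : (Fin 5 → K) ≃ₗ[K] (Fin 5 → K)}
    {D : Submodule K (Fin 5 → K)}
    (hdir : {p : PGPt K | p.submodule ≤ D} =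
      {p : PGPt K | ∃ s t : K, (s ≠ 0 ∨ t ≠ 0) ∧
        p.submodule = Submodule.span K {g ![s, t, 0, 0, 0]}}) :
    D ≤ Submodule.span K {g ![1, 0, 0, 0, 0], g ![0, 1, 0, 0, 0]} := by
  intro v hv
  rcases eq_or_ne v 0 with rfl | hv0
  · exact Submodule.zero_mem _
  have hmk : mk K v hv0 ∈ {p : PGPt K | p.submodule ≤ D} := by
    simpa [submodule_mk] using hv
  rw [hdir] at hmk
  obtain ⟨s, t, -, hst⟩ := hmk
  have hvst : v ∈ Submodule.span K {g ![s, t, 0, 0, 0]} := by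
    rw [← hst, submodule_mk]
    exact Submodule.mem_span_singleton_self v
  obtain ⟨c, rfl⟩ := Submodule.mem_span_singleton.1 hvst
  refine Submodule.smul_mem _ c (Submodule.mem_span_pair.2 ⟨s, t, ?_⟩)
  rw [← map_smul, ← map_smul, ← map_add]
  congr 1
  ext i
  fin_cases i <;> simp

theorem extSet_subset_ruledCubicExt_of_directrix {g : (Fin 5 → K) ≃ₗ[K] (Fin 5 → K)}
    {D : Submodule K (Fin 5 → K)}
    (hdir : {p : PGPt K | p.submodule ≤ D} =
      {p : PGPt K | ∃ s t : K, (s ≠ 0 ∨ t ≠ 0) ∧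
        p.submodule = Submodule.span K {g ![s, t, 0, 0, 0]}}) :
    extSet K L D ⊆ RuledCubicExt K L g := by
  intro p hp
  have hrep : p.rep ∈ Submodule.span L
      {toE K L (g ![1, 0, 0, 0, 0]), toE K L (g ![0, 1, 0, 0, 0])} := by
    rw [← Set.image_pair, ← extSub_span]
    exact extSub_mono (le_span_of_directrix hdir) (p.submodule_le_iff_rep_mem.1 hp)
  obtain ⟨a, c, hac⟩ := Submodule.mem_span_pair.1 hrep
  have hrep' : p.rep = extMap K L g ![a, c, 0, 0, 0] := by
    have hvec : (![a, c, 0, 0, 0] : Fin 5 → L) =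
        a • toE K L ![1, 0, 0, 0, 0] + c • toE K L ![0, 1, 0, 0, 0] := by
      ext i; fin_cases i <;> simp [toE]
    rw [← hac, ← extMap_toE, ← extMap_toE, hvec]
    simp [extMap, Matrix.mulVec_add, Matrix.mulVec_smul]
  refine ⟨a, c, 1, 0, ?_, Or.inl one_ne_zero, ?_⟩
  · by_contra! hzero
    apply p.rep_nonzero
    have hvec : (![0, 0, 0, 0, 0] : Fin 5 → L) = 0 := by
      ext i; fin_cases i <;> rfl
    rw [hrep', hzero.1, hzero.2, hvec]
    simp [extMap]
  · rw [submodule_eq, hrep']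
    simp

end ScalarExtension

theorem stmt17 (hE2 : Module.finrank F E = 2)
    (W : Submodule F (Fin 5 → F)) (hW : Module.finrank F W = 4)
    (S : Set (Submodule F (Fin 5 → F))) (hS : IsSpread F W S)
    (G Gq : Set (PGPtE E)) (hG : IsLineE E G) (hGq : IsLineE E Gq)
    (hGmeet : ∀ U ∈ S, (G ∩ extSet F E U).ncard = 1 ∧ (Gq ∩ extSet F E U).ncard = 1)
    (g : (Fin 5 → F) ≃ₗ[F] (Fin 5 → F))
    (Ub : Submodule F (Fin 5 → F))
    (hdir : {p : PGPt F | p.submodule ≤ Ub} =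
      {p : PGPt F | ∃ s t : F, (s ≠ 0 ∨ t ≠ 0) ∧
        p.submodule = Submodule.span F {g ![s, t, 0, 0, 0]}})
    (hmain : ∀ U ∈ S, U ≠ Ub →
      (∀ p ∈ G ∩ extSet F E U, p ∈ RuledCubicExt F E g) ∧
      (∀ p ∈ Gq ∩ extSet F E U, p ∈ RuledCubicExt F E g)) :
    G ⊆ RuledCubicExt F E g ∧ Gq ⊆ RuledCubicExt F E g := by
  have hline {T : Set (PGPtE E)} (hT : IsLineE E T)
      (hmeet : ∀ U ∈ S, (T ∩ extSet F E U).ncard = 1)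
      (hmainT : ∀ U ∈ S, U ≠ Ub → ∀ p ∈ T ∩ extSet F E U, p ∈ RuledCubicExt F E g) :
      T ⊆ RuledCubicExt F E g := by
    intro p hp
    obtain ⟨U, hU, hpU⟩ := hS.exists_mem_extSet_of_mem_line hE2 hW hT hmeet hp
    rcases eq_or_ne U Ub with rfl | hne
    · exact extSet_subset_ruledCubicExt_of_directrix hdir hpU
    · exact hmainT U hU hne p ⟨hp, hpU⟩
  exact ⟨hline hG (fun U hU => (hGmeet U hU).1) fun U hU hne => (hmain U hU hne).1,
    hline hGq (fun U hU => (hGmeet U hU).2) fun U hU hne => (hmain U hU hne).2⟩
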